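/- Let N_i, N_j be nilpotent n_i×n_i and n_j×n_j complex matrices with ‖N_i‖, ‖N_j‖ ≤ 1 and N_i^{n_i} = 0, N_j^{n_j} = 0, n_i + n_j ≤ 2n. Let γ ∈ ℂ with |γ| ≥ ρ, where 0 < ρ ≤ 1. If matrices X, Y satisfy γ X = N_i X - X N_j + Y, then ‖X‖ ≤ (2/ρ)^{2n-1} ‖Y‖. -/

import Mathlib

open Matrix

/-- The (Euclidean) operator norm of a complex matrix. -/
noncomputable def opNorm {ι κ : Type*} [Fintype ι] [Fintype κ] [DecidableEq κ]
    (M : Matrix ι κ ℂ) : ℝ :=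
  ‖LinearMap.toContinuousLinearMap (Matrix.toEuclideanLin M)‖

/-!
With `L Z = Nᵢ Z - Z Nⱼ` the equation reads `(1 - γ⁻¹ L) X = γ⁻¹ Y`. Left and right
multiplication commute and are nilpotent, so `L ^ (nᵢ + nⱼ - 1) = 0` and the Neumann series of
`γ⁻¹ L` terminates: `X = ∑_{k < nᵢ + nⱼ - 1} (γ⁻¹ L)ᵏ (γ⁻¹ Y)`. Each term is bounded by
`qᵏ ‖γ⁻¹ Y‖` with `q = 2 / ρ`, and `‖γ⁻¹ Y‖ ≤ (q / 2) ‖Y‖`; since `q ≥ 2` the geometric sum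
`(q / 2) ∑_{k < m} qᵏ` is at most `qᵐ`.
-/

open Finset

theorem Module.End.eq_sum_pow_apply_of_sub_apply_eq {R M : Type*} [Ring R] [AddCommGroup M]
    [Module R M] {T : Module.End R M} {m : ℕ} (hT : T ^ m = 0) {x z : M} (h : x - T x = z) :
    x = ∑ k ∈ range m, (T ^ k) z := by
  have := congr($(geom_sum_mul_neg T m) x)
  simpa [hT, ← h] using this.symm

theorem norm_pow_apply_le_of_norm_apply_le {𝕜 E : Type*} [NormedField 𝕜]
    [SeminormedAddCommGroup E] [NormedSpace 𝕜 E] {T : Module.End 𝕜 E} {c : ℝ} (hc : 0 ≤ c)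
    (hT : ∀ z, ‖T z‖ ≤ c * ‖z‖) (k : ℕ) (z : E) : ‖(T ^ k) z‖ ≤ c ^ k * ‖z‖ := by
  induction k with
  | zero => simp
  | succ k ih =>
    calc ‖(T ^ (k + 1)) z‖ = ‖T ((T ^ k) z)‖ := by rw [pow_succ', Module.End.mul_apply]
      _ ≤ c * (c ^ k * ‖z‖) := (hT _).trans (mul_le_mul_of_nonneg_left ih hc)
      _ = c ^ (k + 1) * ‖z‖ := by ring

theorem norm_le_geom_sum_mul_of_sub_apply_eq {𝕜 E : Type*} [NormedField 𝕜]
    [SeminormedAddCommGroup E] [NormedSpace 𝕜 E] {T : Module.End 𝕜 E} {m : ℕ} (hT : T ^ m = 0)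
    {c : ℝ} (hc : 0 ≤ c) (hTc : ∀ z, ‖T z‖ ≤ c * ‖z‖) {x z : E} (h : x - T x = z) :
    ‖x‖ ≤ (∑ k ∈ range m, c ^ k) * ‖z‖ := by
  calc ‖x‖ = ‖∑ k ∈ range m, (T ^ k) z‖ := by rw [← T.eq_sum_pow_apply_of_sub_apply_eq hT h]
    _ ≤ ∑ k ∈ range m, c ^ k * ‖z‖ :=
      norm_sum_le_of_le _ fun k _ => norm_pow_apply_le_of_norm_apply_le hc hTc k z
    _ = (∑ k ∈ range m, c ^ k) * ‖z‖ := (sum_mul ..).symm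

theorem mul_geom_sum_le_two_mul_pow {q : ℝ} (hq : 2 ≤ q) (m : ℕ) :
    q * ∑ k ∈ range m, q ^ k ≤ 2 * q ^ m := by
  have hsum : (∑ k ∈ range m, q ^ k) * (q - 1) = q ^ m - 1 := geom_sum_mul q m
  have hnonneg : 0 ≤ ∑ k ∈ range m, q ^ k := sum_nonneg fun k _ => by positivity
  nlinarith

namespace Matrix

variable {ι κ R : Type*} [CommRing R]

def sylvesterMap [Fintype ι] [Fintype κ] (A : Matrix ι ι R) (B : Matrix κ κ R) :
    Module.End R (Matrix ι κ R) :=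
  mulLeftLinearMap κ R A - mulRightLinearMap ι R B

@[simp]
theorem sylvesterMap_apply [Fintype ι] [Fintype κ] (A : Matrix ι ι R) (B : Matrix κ κ R)
    (Z : Matrix ι κ R) : sylvesterMap A B Z = A * Z - Z * B := rfl

theorem mulLeftLinearMap_pow [Fintype ι] [DecidableEq ι] (A : Matrix ι ι R) (k : ℕ) :
    mulLeftLinearMap κ R A ^ k = mulLeftLinearMap κ R (A ^ k) := by
  induction k with
  | zero => ext; simp
  | succ k ih => rw [pow_succ, ih, pow_succ, mulLeftLinearMap_mul, Module.End.mul_eq_comp]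

theorem mulRightLinearMap_pow [Fintype κ] [DecidableEq κ] (B : Matrix κ κ R) (k : ℕ) :
    mulRightLinearMap ι R B ^ k = mulRightLinearMap ι R (B ^ k) := by
  induction k with
  | zero => ext; simp
  | succ k ih => rw [pow_succ, ih, pow_succ', mulRightLinearMap_mul, Module.End.mul_eq_comp]

theorem sylvesterMap_pow_eq_zero [Fintype ι] [DecidableEq ι] [Fintype κ] [DecidableEq κ]
    {A : Matrix ι ι R} {B : Matrix κ κ R} {a b : ℕ} (hA : A ^ a = 0) (hB : B ^ b = 0) :
    sylvesterMap A B ^ (a + b - 1) = 0 := by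
  have hcomm : Commute (mulLeftLinearMap κ R A) (mulRightLinearMap ι R B) :=
    LinearMap.ext fun Z => (Matrix.mul_assoc A Z B).symm
  rw [sylvesterMap, sub_eq_add_neg]
  refine hcomm.neg_right.add_pow_add_eq_zero_of_pow_eq_zero ?_ ?_
  · rw [mulLeftLinearMap_pow, hA, mulLeftLinearMap_zero_eq_zero]
  · rw [neg_pow, mulRightLinearMap_pow, hB, mulRightLinearMap_zero_eq_zero, mul_zero]

end Matrix

open scoped Matrix.Norms.L2Operator

theorem Matrix.l2_opNorm_sylvesterMap_apply_le {𝕜 ι κ : Type*} [RCLike 𝕜] [Fintype ι]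
    [DecidableEq ι] [Fintype κ] [DecidableEq κ] (A : Matrix ι ι 𝕜) (B : Matrix κ κ 𝕜)
    (Z : Matrix ι κ 𝕜) : ‖sylvesterMap A B Z‖ ≤ (‖A‖ + ‖B‖) * ‖Z‖ :=
  calc ‖A * Z - Z * B‖ ≤ ‖A * Z‖ + ‖Z * B‖ := norm_sub_le _ _
    _ ≤ ‖A‖ * ‖Z‖ + ‖Z‖ * ‖B‖ := add_le_add (l2_opNorm_mul A Z) (l2_opNorm_mul Z B)
    _ = (‖A‖ + ‖B‖) * ‖Z‖ := by ring

theorem sylvester_small_divisor_estimate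
    (n ni nj : ℕ) (hsum : ni + nj ≤ 2 * n)
    (Ni : Matrix (Fin ni) (Fin ni) ℂ) (Nj : Matrix (Fin nj) (Fin nj) ℂ)
    (hNi : opNorm Ni ≤ 1) (hNj : opNorm Nj ≤ 1)
    (hNi0 : Ni ^ ni = 0) (hNj0 : Nj ^ nj = 0)
    (γ : ℂ) (ρ : ℝ) (hρ0 : 0 < ρ) (hρ1 : ρ ≤ 1) (hγ : ρ ≤ ‖γ‖)
    (X Y : Matrix (Fin ni) (Fin nj) ℂ)
    (heq : γ • X = Ni * X - X * Nj + Y) :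
    opNorm X ≤ (2 / ρ) ^ (2 * n - 1) * opNorm Y := by
  set q := 2 / ρ
  have hq : 2 ≤ q := by rw [le_div_iff₀ hρ0]; linarith
  have hγinv : ‖γ⁻¹‖ ≤ q / 2 := by
    rw [norm_inv, div_div_cancel_left' two_ne_zero]; exact inv_anti₀ hρ0 hγ
  have hγ0 : γ ≠ 0 := norm_pos_iff.mp (hρ0.trans_le hγ)
  set T := γ⁻¹ • sylvesterMap Ni Nj
  have hT : T ^ (ni + nj - 1) = 0 := by
    rw [smul_pow, sylvesterMap_pow_eq_zero hNi0 hNj0, smul_zero]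
  have hTq : ∀ Z, ‖T Z‖ ≤ q * ‖Z‖ := fun Z =>
    calc ‖T Z‖ = ‖γ⁻¹‖ * ‖sylvesterMap Ni Nj Z‖ := norm_smul γ⁻¹ (sylvesterMap Ni Nj Z)
      _ ≤ q / 2 * ((1 + 1) * ‖Z‖) := by
        gcongr
        exact (l2_opNorm_sylvesterMap_apply_le Ni Nj Z).trans (by gcongr; exacts [hNi, hNj])
      _ = q * ‖Z‖ := by ring
  have hXY : X - T X = γ⁻¹ • Y := by
    rw [LinearMap.smul_apply, sylvesterMap_apply, eq_inv_smul_iff₀ hγ0, smul_sub, heq, smul_smul,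
      mul_inv_cancel₀ hγ0, one_smul]
    abel
  -- `opNorm` is definitionally the norm of `Matrix.instL2OpNormedAddCommGroup`.
  calc opNorm X = ‖X‖ := rfl
    _ ≤ (∑ k ∈ range (ni + nj - 1), q ^ k) * ‖γ⁻¹ • Y‖ :=
      norm_le_geom_sum_mul_of_sub_apply_eq hT (by positivity) hTq hXY
    _ ≤ (∑ k ∈ range (ni + nj - 1), q ^ k) * (q / 2 * ‖Y‖) := by
      gcongr
      exact (norm_smul_le _ _).trans (by gcongr)
    _ ≤ q ^ (ni + nj - 1) * ‖Y‖ := by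
      nlinarith [mul_geom_sum_le_two_mul_pow hq (ni + nj - 1), norm_nonneg Y]
    _ ≤ q ^ (2 * n - 1) * ‖Y‖ := by
      gcongr
      linarith
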